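/- arXiv:1909.05342 — 4 statements merged into one kernel-verified Lean document; each statement's English description precedes it below -/
import Mathlib

section
/- Fix c > 0 and let α = 1/(ce). Then for all reals n ≥ 3 and 0 < s < n − 1, log(s/(c√n)) / log((n−1)/(n−s−1)) ≤ α√n, provided s > c√n. -/
/-!
Both logarithms are controlled by the tangent-line bounds for `log`: the numerator by
`log x ≤ x / e`, the denominator from below by `log (a / b) ≥ 1 - b / a = s / (n - 1)`.
The quotient is then at most `(s / (c √n e)) / (s / (n - 1)) = (n - 1) / (c e √n) ≤ √n / (c e)`.
-/

namespace Real

lemma log_le_div_exp_one {x : ℝ} (hx : 0 < x) : log x ≤ x / exp 1 := by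
  rw [le_div_iff₀ (exp_pos 1), mul_comm]
  simpa only [exp_log hx] using exp_one_mul_le_exp (x := log x)

lemma sub_div_le_log_div {a b : ℝ} (ha : 0 < a) (hb : 0 < b) : (a - b) / a ≤ log (a / b) := by
  have h := one_sub_inv_le_log_of_pos (div_pos ha hb)
  rwa [inv_div, ← div_self ha.ne', ← sub_div] at h

end Real

open Real

theorem stmt_12_general (c : ℝ) (hc : 0 < c) (n s : ℝ)
    (hs : s < n - 1) (hsc : s > c * Real.sqrt n) :
    Real.log (s / (c * Real.sqrt n)) / Real.log ((n - 1) / (n - s - 1)) ≤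
      (1 / (c * Real.exp 1)) * Real.sqrt n := by
  have hs0 : 0 < s := (by positivity : 0 ≤ c * √n).trans_lt hsc
  have hn1 : 0 < n - 1 := hs0.trans hs
  have hns : 0 < n - s - 1 := by linarith
  have hr : 0 < √n := sqrt_pos.mpr (by linarith)
  have hD : 0 < log ((n - 1) / (n - s - 1)) :=
    log_pos ((one_lt_div hns).mpr (by linarith))
  rw [div_le_iff₀ hD]
  calc log (s / (c * √n)) ≤ s / (c * √n) / exp 1 := log_le_div_exp_one (by positivity)
    _ = 1 / (c * exp 1) * √n * (s / √n ^ 2) := by field_simp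
    _ ≤ 1 / (c * exp 1) * √n * (s / (n - 1)) := by
        gcongr
        rw [sq_sqrt (by linarith)]
        linarith
    _ ≤ 1 / (c * exp 1) * √n * log ((n - 1) / (n - s - 1)) := by
        gcongr
        have h := sub_div_le_log_div hn1 hns
        rwa [show n - 1 - (n - s - 1) = s by ring] at h

theorem stmt_12 (c : ℝ) (hc : 0 < c) (n s : ℝ) (hn : 3 ≤ n) (hs0 : 0 < s)
    (hs : s < n - 1) (hsc : s > c * Real.sqrt n) :
    Real.log (s / (c * Real.sqrt n)) / Real.log ((n - 1) / (n - s - 1)) ≤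
      (1 / (c * Real.exp 1)) * Real.sqrt n :=
  stmt_12_general c hc n s hs hsc
end

section
/- Let c = √(2/(√2·e − e)) and d = 1/√(√2·e − e). Then c ≥ d√2 and d ≥ 1/(ce) + c/2, and among all pairs (c, d) of positive reals satisfying these two constraints, this pair minimizes d. -/
/-!
Write `a = (√2 - 1) e`, so that `c = √(2 / a)` and `d = c / √2`. Substituting the first
constraint into the second gives `c' ≥ √2 / (c' e) + c' / √2`, i.e. `c'² a ≥ 2`, so every
admissible `c'` is at least `c`, where the second constraint holds with equality. Since
`x ↦ 1 / (x e) + x / 2` is increasing once `e x² ≥ 2`, which already holds at `c`, we get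
`d' ≥ 1 / (c' e) + c' / 2 ≥ 1 / (c e) + c / 2 = d`.
-/

open Real

lemma one_div_mul_add_half_le {k x y : ℝ} (hk : 0 < k) (hx : 0 < x) (hxy : x ≤ y)
    (hkx : 2 ≤ k * x ^ 2) :
    1 / (x * k) + x / 2 ≤ 1 / (y * k) + y / 2 := by
  have hy : 0 < y := hx.trans_le hxy
  have hkxy : 2 ≤ k * x * y := by nlinarith
  have hdiff : 1 / (y * k) + y / 2 - (1 / (x * k) + x / 2)
      = (y - x) * (k * x * y - 2) / (2 * k * x * y) := by
    field_simp
    ring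
  have : 0 ≤ (y - x) * (k * x * y - 2) / (2 * k * x * y) := by
    apply div_nonneg (mul_nonneg _ _) (by positivity) <;> linarith
  linarith

lemma two_le_mul_sq_of_admissible {k c d : ℝ} (hk : 0 < k) (hc : 0 < c)
    (hcd : c ≥ d * √2) (hdc : d ≥ 1 / (c * k) + c / 2) :
    2 ≤ (√2 - 1) * k * c ^ 2 := by
  have hs2 : √2 ^ 2 = 2 := Real.sq_sqrt zero_le_two
  have h2d : 2 * d ≤ √2 * c :=
    calc 2 * d = √2 * (d * √2) := by linear_combination (-d) * hs2
      _ ≤ √2 * c := mul_le_mul_of_nonneg_left hcd (Real.sqrt_nonneg 2)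
  have hsum : 2 / (c * k) + c ≤ √2 * c := by
    have : 2 / (c * k) = 2 * (1 / (c * k)) := by ring
    linarith
  have hck : 0 < c * k := mul_pos hc hk
  have hcancel : 2 / (c * k) * (c * k) = 2 := div_mul_cancel₀ 2 hck.ne'
  nlinarith [mul_le_mul_of_nonneg_right hsum hck.le]

lemma div_sqrt_two_eq_one_div_mul_add_half {k c : ℝ} (hk : 0 < k) (hc : 0 < c)
    (hkc : (√2 - 1) * k * c ^ 2 = 2) :
    c / √2 = 1 / (c * k) + c / 2 := by
  have hs2 : √2 ^ 2 = 2 := Real.sq_sqrt zero_le_two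
  field_simp
  linear_combination √2 * hkc - (c ^ 2 * k) * hs2

theorem stmt_14 :
    let e := Real.exp 1
    let c := Real.sqrt (2 / (Real.sqrt 2 * e - e))
    let d := 1 / Real.sqrt (Real.sqrt 2 * e - e)
    c ≥ d * Real.sqrt 2 ∧ d ≥ 1 / (c * e) + c / 2 ∧
      ∀ c' d' : ℝ, 0 < c' → 0 < d' → c' ≥ d' * Real.sqrt 2 →
        d' ≥ 1 / (c' * e) + c' / 2 → d ≤ d' := by
  intro e c d
  have he : 0 < e := exp_pos 1
  have hs1 : 0 < √2 - 1 := sub_pos.2 one_lt_sqrt_two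
  have ha : 0 < √2 * e - e := by linarith [mul_pos hs1 he]
  have hc : 0 < c := Real.sqrt_pos.2 (div_pos two_pos ha)
  have hcd : c = d * √2 := by
    simp only [c, d]
    rw [Real.sqrt_div zero_le_two]
    ring
  have hcsq : (√2 - 1) * e * c ^ 2 = 2 := by
    rw [Real.sq_sqrt (div_pos two_pos ha).le]
    field_simp
  have hd : d = 1 / (c * e) + c / 2 := by
    rw [← div_sqrt_two_eq_one_div_mul_add_half he hc hcsq, hcd,
      mul_div_cancel_right₀ _ (by positivity)]
  refine ⟨hcd.ge, hd.ge, fun c' d' hc' _ hcd' hdc' => ?_⟩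
  have hle : c ≤ c' := by
    have hadm := two_le_mul_sq_of_admissible he hc' hcd' hdc'
    have hsq : (√2 - 1) * e * c ^ 2 ≤ (√2 - 1) * e * c' ^ 2 := by linarith
    exact (pow_le_pow_iff_left₀ hc.le hc'.le two_ne_zero).1
      (le_of_mul_le_mul_left hsq (mul_pos hs1 he))
  have hec : 2 ≤ e * c ^ 2 := by
    have hs_lt : √2 < 2 := by nlinarith [Real.sq_sqrt (zero_le_two : (0 : ℝ) ≤ 2)]
    nlinarith [mul_pos he (pow_pos hc 2)]
  calc d = 1 / (c * e) + c / 2 := hd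
    _ ≤ 1 / (c' * e) + c' / 2 := one_div_mul_add_half_le he hc hle hec
    _ ≤ d' := hdc'
end

section
/- Let c = 1/√((√2−1)e) and d = √(2/((√2−1)e)). Then c ≥ d/√2 and d ≥ 1/(ce) + c, and among all pairs (c, d) of positive reals satisfying these two constraints, this pair minimizes d. -/
theorem stmt_15 :
    let e := Real.exp 1
    let c := 1 / Real.sqrt ((Real.sqrt 2 - 1) * e)
    let d := Real.sqrt (2 / ((Real.sqrt 2 - 1) * e))
    c ≥ d / Real.sqrt 2 ∧ d ≥ 1 / (c * e) + c ∧
      ∀ c' d' : ℝ, 0 < c' → 0 < d' → c' ≥ d' / Real.sqrt 2 →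
        d' ≥ 1 / (c' * e) + c' → d ≤ d' := by
  intro e c d
  have hE : (0:ℝ) < e := Real.exp_pos 1
  have hr : (0:ℝ) < Real.sqrt 2 := Real.sqrt_pos.mpr (by norm_num)
  have hr2 : Real.sqrt 2 ^ 2 = 2 := Real.sq_sqrt (by norm_num)
  have hrgt : 1 < Real.sqrt 2 := by nlinarith [hr2, hr]
  have hs : 0 < Real.sqrt 2 - 1 := by linarith
  have hsE : 0 < (Real.sqrt 2 - 1) * e := by positivity
  have hApos : 0 < Real.sqrt ((Real.sqrt 2 - 1) * e) := Real.sqrt_pos.mpr hsE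
  set A := Real.sqrt ((Real.sqrt 2 - 1) * e) with hA
  have hA2 : A ^ 2 = (Real.sqrt 2 - 1) * e := Real.sq_sqrt hsE.le
  have hd : d = Real.sqrt 2 / A := by
    show Real.sqrt (2 / ((Real.sqrt 2 - 1) * e)) = _
    rw [Real.sqrt_div (by norm_num : (0:ℝ) ≤ 2)]
  have hc : c = 1 / A := rfl
  refine ⟨?_, ?_, ?_⟩
  · rw [hc, hd, ge_iff_le]
    rw [div_le_div_iff₀ hr (by positivity : (0:ℝ) < A)]
    rw [div_mul_cancel₀ _ hApos.ne']
    linarith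
  · rw [hc, hd, ge_iff_le]
    rw [div_add_div _ _ (by positivity : (1/A*e) ≠ 0) hApos.ne',
      div_le_div_iff₀ (by positivity) hApos]
    field_simp
    nlinarith [hr2, hA2, hApos, hE]
  · intro c' d' hc' hd' h1 h2
    have h1' : d' ≤ c' * Real.sqrt 2 := (div_le_iff₀ hr).mp h1
    have h2' : 1 + c' ^ 2 * e ≤ d' * (c' * e) := by
      have := mul_le_mul_of_nonneg_right h2 (by positivity : (0:ℝ) ≤ c' * e)
      calc 1 + c' ^ 2 * e = (1 / (c' * e) + c') * (c' * e) := by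
            field_simp
        _ ≤ d' * (c' * e) := this
    have hfac1 : 0 ≤ c' * Real.sqrt 2 - d' := by linarith
    have hfac2 : 0 ≤ Real.sqrt 2 * c' + d' - Real.sqrt 2 * d' := by
      nlinarith [hr2, hrgt, hd'.le]
    have hkey : 2 ≤ d' ^ 2 * ((Real.sqrt 2 - 1) * e) := by
      nlinarith [mul_nonneg (mul_nonneg hfac1 hfac2) hE.le, hr2, h2', hE]
    have h2sE : 2 / ((Real.sqrt 2 - 1) * e) ≤ d' ^ 2 := by
      rw [div_le_iff₀ hsE]; linarith
    calc d = Real.sqrt (2 / ((Real.sqrt 2 - 1) * e)) := rfl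
      _ ≤ Real.sqrt (d' ^ 2) := Real.sqrt_le_sqrt h2sE
      _ = d' := Real.sqrt_sq hd'.le
end

section
/- Define g* as follows: g*(n, s, t) = ⌈(t+1)/2⌉ if s < n−1 and t ≤ c√n; g*(n, s, t) = log(t/(c√n))/log((n−1)/(n−s−1)) + c√n/2 + 5/2 if s < n−1 and t > c√n. If t > c√n and t′ ≤ c√n (with t′ ≥ 0 an integer), then g*(n, s, t) ≥ g*(n, s, t′) + 1. -/
noncomputable def gstar (c : ℝ) (n s t : ℤ) : ℝ :=
  if (s : ℝ) < (n : ℝ) - 1 then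
    (if (t : ℝ) ≤ c * Real.sqrt (n : ℝ) then ((⌈((t : ℝ) + 1) / 2⌉ : ℤ) : ℝ)
     else Real.log ((t : ℝ) / (c * Real.sqrt (n : ℝ))) /
            Real.log (((n : ℝ) - 1) / ((n : ℝ) - (s : ℝ) - 1)) +
          c * Real.sqrt (n : ℝ) / 2 + 5 / 2)
  else 1

theorem stmt_17 (c : ℝ) (hc : 0 < c) (n s t t' : ℤ) (hn : 3 ≤ n)
    (ht1 : 1 ≤ t) (hts : t ≤ s) (hsn : s < n - 1) (ht'0 : 0 ≤ t')
    (ht : (t : ℝ) > c * Real.sqrt (n : ℝ)) (ht' : (t' : ℝ) ≤ c * Real.sqrt (n : ℝ)) :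
    gstar c n s t ≥ gstar c n s t' + 1 := by
  have hsr : (s : ℝ) < (n : ℝ) - 1 := by
    have : (s : ℝ) < ((n : ℤ) - 1 : ℤ) := by exact_mod_cast hsn
    push_cast at this; linarith
  have hsq : 0 < Real.sqrt (n : ℝ) := Real.sqrt_pos.mpr (by
    have : (3 : ℝ) ≤ (n : ℝ) := by exact_mod_cast hn
    linarith)
  have hcs : 0 < c * Real.sqrt (n : ℝ) := mul_pos hc hsq
  have hlognum : 0 ≤ Real.log ((t : ℝ) / (c * Real.sqrt (n : ℝ))) :=
    Real.log_nonneg ((one_le_div hcs).mpr (le_of_lt ht))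
  have hden : 0 < (n : ℝ) - (s : ℝ) - 1 := by linarith
  have hs1 : (1 : ℝ) ≤ (s : ℝ) := by exact_mod_cast ht1.trans hts
  have hlogden : 0 < Real.log (((n : ℝ) - 1) / ((n : ℝ) - (s : ℝ) - 1)) :=
    Real.log_pos ((one_lt_div hden).mpr (by linarith))
  have hrat : 0 ≤ Real.log ((t : ℝ) / (c * Real.sqrt (n : ℝ))) /
      Real.log (((n : ℝ) - 1) / ((n : ℝ) - (s : ℝ) - 1)) :=
    div_nonneg hlognum hlogden.le
  have hceil : ((⌈((t' : ℝ) + 1) / 2⌉ : ℤ) : ℝ) < ((t' : ℝ) + 1) / 2 + 1 :=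
    Int.ceil_lt_add_one _
  simp only [gstar, if_pos hsr, if_neg (not_le.mpr ht), if_pos ht']
  linarith
end
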